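/- Let s > 0, and let k ∈ ℕ be the integer with s ∈ [k−1, k). Let α > s−1, β ∈ ℝ, and n ∈ ℕ. Then for every x ∈ (−1, 1), D_+^s[ (1−·)^α P_n^{(α,β)} ](x) = [Γ(n+α+1)/Γ(n+α−s+1)] · (1−x)^{α−s} · P_n^{(α−s, β+s)}(x). Equivalently, in terms of the generalized Jacobi functions, D_+^s[^+J_n^{(−α,β)}] = [Γ(n+α+1)/Γ(n+α−s+1)] · ^+J_n^{(−α+s, β+s)} on (−1,1). -/

import Mathlib

open MeasureTheory Filter Finset

/-- Jacobi polynomial with real parameters. -/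
noncomputable def jacobiP (a b : ℝ) (n : ℕ) (x : ℝ) : ℝ :=
  ∑ j ∈ Finset.range (n + 1),
    ((ascPochhammer ℝ j).eval ((n : ℝ) + a + b + 1) / (Nat.factorial j : ℝ)) *
      ((ascPochhammer ℝ (n - j)).eval (a + (j : ℝ) + 1) / (Nat.factorial (n - j) : ℝ)) *
      ((x - 1) / 2) ^ j

/-- Right Riemann-Liouville fractional integral on (-1,1). -/
noncomputable def Iplus (ρ : ℝ) (v : ℝ → ℝ) (x : ℝ) : ℝ :=
  (1 / Real.Gamma ρ) * ∫ y in x..1, (y - x) ^ (ρ - 1) * v y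

/-- Left Riemann-Liouville fractional integral on (-1,1). -/
noncomputable def Iminus (ρ : ℝ) (v : ℝ → ℝ) (x : ℝ) : ℝ :=
  (1 / Real.Gamma ρ) * ∫ y in (-1 : ℝ)..x, (x - y) ^ (ρ - 1) * v y

/-- Right Riemann-Liouville fractional derivative of order `s ∈ [k-1,k)`. -/
noncomputable def Dplus (s : ℝ) (k : ℕ) (v : ℝ → ℝ) (x : ℝ) : ℝ :=
  (-1 : ℝ) ^ k * iteratedDeriv k (Iplus ((k : ℝ) - s) v) x

/-- Left Riemann-Liouville fractional derivative of order `s ∈ [k-1,k)`. -/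
noncomputable def Dminus (s : ℝ) (k : ℕ) (v : ℝ → ℝ) (x : ℝ) : ℝ :=
  iteratedDeriv k (Iminus ((k : ℝ) - s) v) x

/-- Generalized Jacobi function `⁺J_n^{(-α,β)}(x) = (1-x)^α P_n^{(α,β)}(x)` (for `α > -1`). -/
noncomputable def GJFplus (α β : ℝ) (n : ℕ) (x : ℝ) : ℝ :=
  (1 - x) ^ α * jacobiP α β n x

/-!
The generalized Jacobi function is a finite combination of the powers `(1 - x) ^ (α + j)`,
`j ≤ n`. After the substitution `y = x + (1 - x) t`, the right Riemann–Liouville integral of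
order `ρ` of `(1 - x) ^ μ` is a Beta integral, equal to
`Γ(μ + 1) / Γ(μ + ρ + 1) · (1 - x) ^ (μ + ρ)`; differentiating `k` times with `ρ = k - s`
turns this into `Γ(μ + 1) / Γ(μ - s + 1) · (1 - x) ^ (μ - s)`. Of the two Pochhammer factors
in the Jacobi coefficients, the first depends only on `α + β`, which `(α, β) ↦ (α - s, β + s)`
preserves, and the second, `(α + j + 1)_{n - j} = Γ(n + α + 1) / Γ(α + j + 1)`, absorbs the new
Gamma ratio up to the common factor `Γ(n + α + 1) / Γ(n + α - s + 1)`.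
-/

open Real Set

lemma Real.Gamma_add_nat_div_Gamma_eq {z : ℝ} (hz : 0 < z) (n : ℕ) :
    Gamma (z + n) / Gamma z = (ascPochhammer ℝ n).eval z := by
  induction n with
  | zero => simp [(Gamma_pos_of_pos hz).ne']
  | succ n ih =>
    rw [Nat.cast_succ, ← add_assoc, Gamma_add_one (by positivity), ascPochhammer_succ_eval,
      ← ih]
    ring

lemma descPochhammer_eval_eq_Gamma_div {p : ℝ} {k : ℕ} (h : 0 < p - k + 1) :
    (descPochhammer ℝ k).eval p = Gamma (p + 1) / Gamma (p - k + 1) := by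
  rw [descPochhammer_eval_eq_ascPochhammer, ← Real.Gamma_add_nat_div_Gamma_eq h]
  ring_nf

lemma integral_rpow_mul_one_sub_rpow {u v : ℝ} (hu : 0 < u) (hv : 0 < v) :
    ∫ t in (0 : ℝ)..1, t ^ (u - 1) * (1 - t) ^ (v - 1) = Gamma u * Gamma v / Gamma (u + v) := by
  have hB := Complex.betaIntegral_eq_Gamma_mul_div u v (by simpa) (by simpa)
  rw [← Complex.ofReal_add, Complex.Gamma_ofReal, Complex.Gamma_ofReal, Complex.Gamma_ofReal,
    Complex.betaIntegral] at hB
  apply Complex.ofReal_injective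
  push_cast
  rw [← hB, ← intervalIntegral.integral_ofReal]
  refine intervalIntegral.integral_congr fun t ht => ?_
  rw [Set.uIcc_of_le zero_le_one] at ht
  rw [Complex.ofReal_mul, Complex.ofReal_cpow ht.1, Complex.ofReal_cpow (sub_nonneg.2 ht.2)]
  push_cast
  rfl

lemma integral_sub_rpow_mul_one_sub_rpow {x ρ μ : ℝ} (hx : x < 1) (hρ : 0 < ρ)
    (hμ : -1 < μ) :
    ∫ y in x..1, (y - x) ^ (ρ - 1) * (1 - y) ^ μ
      = Gamma ρ * Gamma (μ + 1) / Gamma (μ + ρ + 1) * (1 - x) ^ (μ + ρ) := by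
  have hx' : 0 < 1 - x := sub_pos.2 hx
  have hsub := intervalIntegral.integral_comp_mul_add
    (fun y => (y - x) ^ (ρ - 1) * (1 - y) ^ μ) hx'.ne' x (a := 0) (b := 1)
  simp only [mul_zero, zero_add, mul_one, sub_add_cancel, smul_eq_mul] at hsub
  have hpt : EqOn (fun t => ((1 - x) * t + x - x) ^ (ρ - 1) * (1 - ((1 - x) * t + x)) ^ μ)
      (fun t => (1 - x) ^ (ρ - 1 + μ) * (t ^ (ρ - 1) * (1 - t) ^ ((μ + 1) - 1)))
      (uIcc 0 1) := by
    intro t ht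
    rw [Set.uIcc_of_le zero_le_one] at ht
    simp only
    rw [add_sub_cancel_right, show 1 - ((1 - x) * t + x) = (1 - x) * (1 - t) by ring,
      mul_rpow hx'.le ht.1, mul_rpow hx'.le (sub_nonneg.2 ht.2), add_sub_cancel_right,
      rpow_add hx']
    ring
  rw [intervalIntegral.integral_congr hpt, intervalIntegral.integral_const_mul,
    integral_rpow_mul_one_sub_rpow hρ (by linarith), eq_inv_mul_iff_mul_eq₀ hx'.ne'] at hsub
  have hpow : (1 - x) ^ (μ + ρ) = (1 - x) * (1 - x) ^ (ρ - 1 + μ) := by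
    rw [show μ + ρ = 1 + (ρ - 1 + μ) by ring, rpow_add hx', rpow_one]
  rw [← hsub, hpow, show ρ + (μ + 1) = μ + ρ + 1 by ring]
  ring

lemma intervalIntegrable_sub_rpow_mul_one_sub_rpow {x ρ μ : ℝ} (hx : x < 1) (hρ : 0 < ρ)
    (hμ : -1 < μ) :
    IntervalIntegrable (fun y => (y - x) ^ (ρ - 1) * (1 - y) ^ μ) volume x 1 := by
  refine intervalIntegral.intervalIntegrable_of_integral_ne_zero ?_
  rw [integral_sub_rpow_mul_one_sub_rpow hx hρ hμ]
  have := Gamma_pos_of_pos hρ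
  have := Gamma_pos_of_pos (show 0 < μ + 1 by linarith)
  have := Gamma_pos_of_pos (show 0 < μ + ρ + 1 by linarith)
  have := rpow_pos_of_pos (sub_pos.2 hx) (μ + ρ)
  positivity

lemma Iplus_congr {ρ x : ℝ} {v w : ℝ → ℝ} (hx : x ≤ 1) (h : EqOn v w (Ioo x 1)) :
    Iplus ρ v x = Iplus ρ w x := by
  unfold Iplus
  rw [intervalIntegral.integral_of_le hx, intervalIntegral.integral_of_le hx,
    integral_Ioc_eq_integral_Ioo, integral_Ioc_eq_integral_Ioo]
  congr 1
  exact setIntegral_congr_fun measurableSet_Ioo fun y hy => by rw [h hy]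

lemma Iplus_finset_sum {ι : Type*} (I : Finset ι) (c : ι → ℝ) (f : ι → ℝ → ℝ)
    {ρ x : ℝ}
    (hf : ∀ j ∈ I, IntervalIntegrable (fun y => (y - x) ^ (ρ - 1) * f j y) volume x 1) :
    Iplus ρ (fun y => ∑ j ∈ I, c j * f j y) x = ∑ j ∈ I, c j * Iplus ρ (f j) x := by
  simp only [Iplus, Finset.mul_sum, mul_left_comm _ (c _)]
  rw [intervalIntegral.integral_finsetSum fun j hj => (hf j hj).const_mul (c j)]
  simp only [intervalIntegral.integral_const_mul, Finset.mul_sum, mul_left_comm _ (c _)]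

lemma Iplus_sum_one_sub_rpow {ι : Type*} (I : Finset ι) (c μ : ι → ℝ) {ρ x : ℝ}
    (hx : x < 1) (hρ : 0 < ρ) (hμ : ∀ j ∈ I, -1 < μ j) :
    Iplus ρ (fun y => ∑ j ∈ I, c j * (1 - y) ^ μ j) x
      = ∑ j ∈ I, c j * (Gamma (μ j + 1) / Gamma (μ j + ρ + 1)) * (1 - x) ^ (μ j + ρ) := by
  rw [Iplus_finset_sum I c _ fun j hj =>
    intervalIntegrable_sub_rpow_mul_one_sub_rpow hx hρ (hμ j hj)]
  refine Finset.sum_congr rfl fun j hj => ?_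
  rw [Iplus, integral_sub_rpow_mul_one_sub_rpow hx hρ (hμ j hj)]
  field_simp [(Gamma_pos_of_pos hρ).ne']

lemma iteratedDeriv_one_sub_rpow (p x : ℝ) (m : ℕ) :
    iteratedDeriv m (fun y => (1 - y) ^ p) x
      = (-1) ^ m * (descPochhammer ℝ m).eval p * (1 - x) ^ (p - m) := by
  rw [congrFun (iteratedDeriv_comp_const_sub (f := fun y : ℝ => y ^ p) m 1) x,
    iteratedDeriv_eq_iterate, iter_deriv_rpow_const, smul_eq_mul, mul_assoc]

lemma Dplus_congr {s a x : ℝ} {k : ℕ} {v w : ℝ → ℝ} (h : EqOn v w (Ioo a 1))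
    (hx : x ∈ Ioo a 1) : Dplus s k v x = Dplus s k w x := by
  unfold Dplus
  congr 1
  refine Filter.EventuallyEq.iteratedDeriv_eq k ?_
  filter_upwards [Ioo_mem_nhds hx.1 hx.2] with y hy
  exact Iplus_congr hy.2.le (h.mono (Ioo_subset_Ioo_left hy.1.le))

lemma Dplus_sum_one_sub_rpow {ι : Type*} (I : Finset ι) (c μ : ι → ℝ) {s x : ℝ} {k : ℕ}
    (hs : 0 ≤ s) (hk : s < k) (hμ : ∀ j ∈ I, s - 1 < μ j) (hx : x < 1) :
    Dplus s k (fun y => ∑ j ∈ I, c j * (1 - y) ^ μ j) x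
      = ∑ j ∈ I, c j * (Gamma (μ j + 1) / Gamma (μ j - s + 1)) * (1 - x) ^ (μ j - s) := by
  set ρ : ℝ := k - s with hρ_def
  have hρ : 0 < ρ := sub_pos.2 hk
  have hI : Iplus ρ (fun y => ∑ j ∈ I, c j * (1 - y) ^ μ j) =ᶠ[nhds x] fun y =>
      ∑ j ∈ I, c j * (Gamma (μ j + 1) / Gamma (μ j + ρ + 1)) * (1 - y) ^ (μ j + ρ) :=
    Filter.eventually_of_mem (Iio_mem_nhds hx) fun y hy =>
      Iplus_sum_one_sub_rpow I c μ hy hρ fun j hj => by linarith [hμ j hj]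
  have hsmooth (j) (_ : j ∈ I) : ContDiffAt ℝ k (fun y =>
      c j * (Gamma (μ j + 1) / Gamma (μ j + ρ + 1)) * (1 - y) ^ (μ j + ρ)) x :=
    contDiffAt_const.mul
      ((contDiffAt_const.sub contDiffAt_id).rpow_const_of_ne (sub_pos.2 hx).ne')
  rw [Dplus, hI.iteratedDeriv_eq, iteratedDeriv_fun_sum hsmooth, Finset.mul_sum]
  refine Finset.sum_congr rfl fun j hj => ?_
  have hμs : 0 < μ j - s + 1 := by linarith [hμ j hj]
  have hμρ : 0 < μ j + ρ + 1 := by linarith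
  rw [iteratedDeriv_const_mul_field, iteratedDeriv_one_sub_rpow,
    descPochhammer_eval_eq_Gamma_div (by linarith), show μ j + ρ - k = μ j - s by ring]
  have hsign : ((-1 : ℝ) ^ k) ^ 2 = 1 := by rw [← pow_mul, mul_comm, pow_mul]; norm_num
  field_simp [(Gamma_pos_of_pos hμs).ne', (Gamma_pos_of_pos hμρ).ne']
  linear_combination (c j * Gamma (μ j + 1) * (1 - x) ^ (μ j - s)) * hsign

noncomputable def jacobiCoeff (a b : ℝ) (n j : ℕ) : ℝ :=
  ((ascPochhammer ℝ j).eval ((n : ℝ) + a + b + 1) / (Nat.factorial j : ℝ)) *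
    ((ascPochhammer ℝ (n - j)).eval (a + (j : ℝ) + 1) / (Nat.factorial (n - j) : ℝ))

lemma GJFplus_eq_sum (a b : ℝ) (n : ℕ) {y : ℝ} (hy : y < 1) :
    GJFplus a b n y
      = ∑ j ∈ Finset.range (n + 1), jacobiCoeff a b n j * (-1 / 2) ^ j * (1 - y) ^ (a + j) := by
  rw [GJFplus, jacobiP, Finset.mul_sum]
  refine Finset.sum_congr rfl fun j _ => ?_
  rw [rpow_add_natCast (sub_pos.2 hy).ne', show (y - 1) / 2 = -1 / 2 * (1 - y) by ring,
    mul_pow, jacobiCoeff]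
  ring

lemma jacobiCoeff_mul_Gamma_div {a b s : ℝ} {n j : ℕ} (hj : j ≤ n) (ha : -1 < a)
    (has : -1 < a - s) :
    jacobiCoeff a b n j * (Gamma (a + j + 1) / Gamma (a + j - s + 1))
      = Gamma (n + a + 1) / Gamma (n + a - s + 1) * jacobiCoeff (a - s) (b + s) n j := by
  have hj' : (j : ℝ) ≤ n := Nat.cast_le.2 hj
  have h1 : 0 < a + j + 1 := by linarith [(Nat.cast_nonneg j : (0 : ℝ) ≤ j)]
  have h2 : 0 < a - s + j + 1 := by linarith [(Nat.cast_nonneg j : (0 : ℝ) ≤ j)]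
  have h3 : 0 < n + a - s + 1 := by linarith
  rw [jacobiCoeff, jacobiCoeff, ← Real.Gamma_add_nat_div_Gamma_eq h1,
    ← Real.Gamma_add_nat_div_Gamma_eq h2, Nat.cast_sub hj,
    show (n : ℝ) + (a - s) + (b + s) = n + a + b by ring,
    show a + j + 1 + (n - j) = n + a + 1 by ring,
    show a - s + j + 1 + (n - j) = n + a - s + 1 by ring,
    show a - s + j + 1 = a + j - s + 1 by ring] at *
  field_simp [(Gamma_pos_of_pos h1).ne', (Gamma_pos_of_pos h2).ne', (Gamma_pos_of_pos h3).ne']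

theorem stmt8_general (s : ℝ) (hs : 0 < s) (k : ℕ) (hk2 : s < k)
    (α β : ℝ) (hα : s - 1 < α) (n : ℕ) :
    ∀ x ∈ Set.Ioo (-1 : ℝ) 1,
      Dplus s k (GJFplus α β n) x =
        Real.Gamma ((n : ℝ) + α + 1) / Real.Gamma ((n : ℝ) + α - s + 1) *
          GJFplus (α - s) (β + s) n x ∧
      Dplus s k (fun y => (1 - y) ^ α * jacobiP α β n y) x =
        Real.Gamma ((n : ℝ) + α + 1) / Real.Gamma ((n : ℝ) + α - s + 1) *
          ((1 - x) ^ (α - s) * jacobiP (α - s) (β + s) n x) := by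
  intro x hx
  have hμ (j : ℕ) (_ : j ∈ Finset.range (n + 1)) : s - 1 < α + j := by
    linarith [(Nat.cast_nonneg j : (0 : ℝ) ≤ j)]
  have hD : Dplus s k (GJFplus α β n) x
      = Gamma (n + α + 1) / Gamma (n + α - s + 1) * GJFplus (α - s) (β + s) n x := by
    rw [Dplus_congr (fun y hy => GJFplus_eq_sum α β n hy.2) hx,
      Dplus_sum_one_sub_rpow _ _ _ hs.le hk2 hμ hx.2, GJFplus_eq_sum _ _ _ hx.2, Finset.mul_sum]
    refine Finset.sum_congr rfl fun j hj => ?_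
    have hj : j ≤ n := Nat.lt_succ_iff.1 (Finset.mem_range.1 hj)
    rw [show (1 - x) ^ (α + (j : ℝ) - s) = (1 - x) ^ (α - s + j) by ring_nf]
    linear_combination ((-1 / 2) ^ j * (1 - x) ^ (α - s + j)) *
      jacobiCoeff_mul_Gamma_div (b := β) (s := s) hj (by linarith) (by linarith)
  exact ⟨hD, hD⟩

/-- Theorem 3.1, right fractional derivative of GJFs. -/
theorem stmt8 (s : ℝ) (hs : 0 < s) (k : ℕ) (hk1 : (k : ℝ) - 1 ≤ s) (hk2 : s < k)
    (α β : ℝ) (hα : s - 1 < α) (n : ℕ) :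
    ∀ x ∈ Set.Ioo (-1 : ℝ) 1,
      Dplus s k (GJFplus α β n) x =
        Real.Gamma ((n : ℝ) + α + 1) / Real.Gamma ((n : ℝ) + α - s + 1) *
          GJFplus (α - s) (β + s) n x ∧
      Dplus s k (fun y => (1 - y) ^ α * jacobiP α β n y) x =
        Real.Gamma ((n : ℝ) + α + 1) / Real.Gamma ((n : ℝ) + α - s + 1) *
          ((1 - x) ^ (α - s) * jacobiP (α - s) (β + s) n x) :=
  stmt8_general s hs k hk2 α β hα n
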